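/- There exists an undirected ACR-GNN node classifier such that for every finite undirected labelled graph H of dimension 3 and every node v of H, the classifier outputs true at v if and only if H is isomorphic to gad(G) for some strict linear order G. -/

import Mathlib

/-!
Four rounds of colour refinement, with injective codes for finite multisets of real vectors
(there are only continuum many), let every node see the labels of its neighbours and, along
every path of length three, the labels on the path and the number `N₂` of `P₂`-neighbours at
its end; a global readout hands every node the multiset of all these colours. This multiset
decides φ₁, φ₂, ψ and `N₂ u < |P₁|`.

The gadgetisation of a strict linear order satisfies these conditions, `N₂ u` being the
number of successors of `u`. Conversely, under them every `P₂`-node `b` lies on a unique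
gadget path from a `P₁`-node `src b` to a `P₁`-node `tgt b`, and `N₂` is a bijection from the
`P₁`-nodes onto `{0, …, |P₁| - 1}`. Since `src b = u` for exactly `N₂ u` nodes `b` and ψ
provides, for each `i < N₂ u`, a gadget edge from `u` to the node with `N₂ = i`, the gadget
edges out of `u` go exactly to the nodes of smaller `N₂`, each once. So the gadget edges
form the strict linear order `N₂ w < N₂ u` and the graph is its gadgetisation.
-/

/-- A strict linear order on a type `V`: an irreflexive, transitive and total
binary relation. -/
def IsStrictLinearOrderRel {V : Type} (E : V → V → Prop) : Prop :=
  (∀ v, ¬ E v v) ∧ (∀ u v w, E u v → E v w → E u w) ∧ (∀ u v : V, u ≠ v → E u v ∨ E v u)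

/-- Vertices of the gadgetisation of a directed graph `(V, E)`: a node `v¹_u` for every
`u : V` (left summand) and, for every edge `e` of `E`, a node `v²_e` (right summand with
second component `false`) and a node `v³_e` (second component `true`). -/
def GadV {V : Type} (E : V → V → Prop) : Type :=
  V ⊕ ({p : V × V // E p.1 p.2} × Bool)

/-- The (symmetric) adjacency relation of the gadgetisation: every edge `(u,w)` of the
original graph is replaced by the undirected path `v¹_u — v²_{(u,w)} — v³_{(u,w)} — v¹_w`. -/
def gadAdj {V : Type} (E : V → V → Prop) : GadV E → GadV E → Prop
  | Sum.inl u, Sum.inr (e, b) => (b = false ∧ e.val.1 = u) ∨ (b = true ∧ e.val.2 = u)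
  | Sum.inr (e, b), Sum.inl u => (b = false ∧ e.val.1 = u) ∨ (b = true ∧ e.val.2 = u)
  | Sum.inr (e, b), Sum.inr (e', b') => e = e' ∧ b ≠ b'
  | Sum.inl _, Sum.inl _ => False

/-- The labelling of the gadgetisation: `v¹`-nodes get label `(1,0,0)`, `v²`-nodes get
`(0,1,0)` and `v³`-nodes get `(0,0,1)`. -/
def gadLab {V : Type} (E : V → V → Prop) : GadV E → Fin 3 → Bool
  | Sum.inl _ => fun i => decide (i = 0)
  | Sum.inr (_, false) => fun i => decide (i = 1)
  | Sum.inr (_, true) => fun i => decide (i = 2)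

noncomputable instance GadV.fintype {V : Type} [Fintype V] (E : V → V → Prop) :
    Fintype (GadV E) := by
  classical
  unfold GadV
  infer_instance

/-- An isomorphism of labelled graphs: an edge-preserving and label-preserving bijection. -/
def IsoLabGraph {V₁ V₂ : Type} {d : ℕ} (E₁ : V₁ → V₁ → Prop) (lab₁ : V₁ → Fin d → Bool)
    (E₂ : V₂ → V₂ → Prop) (lab₂ : V₂ → Fin d → Bool) : Prop :=
  ∃ f : V₁ ≃ V₂, (∀ u v, E₁ u v ↔ E₂ (f u) (f v)) ∧ ∀ v, lab₁ v = lab₂ (f v)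

/-- `(W, EH, labH)` is isomorphic to the gadgetisation of some (finite) strict linear
order. -/
def IsGadLin {W : Type} (EH : W → W → Prop) (labH : W → Fin 3 → Bool) : Prop :=
  ∃ (U : Type) (_ : Fintype U) (R : U → U → Prop),
    IsStrictLinearOrderRel R ∧ IsoLabGraph EH labH (gadAdj R) (gadLab R)

/-- A gadgetised path from `u` to `z` via `w` (a `P₂` node) and `v` (a `P₃` node). -/
def GadPath {V : Type} (E : V → V → Prop) (lab : V → Fin 3 → Bool) (u w v z : V) : Prop :=
  lab u 0 = true ∧ lab w 1 = true ∧ lab v 2 = true ∧ lab z 0 = true ∧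
    E u w ∧ E w v ∧ E v z

/-- There is a gadgetised edge from `u` to `z`. -/
def GadEdge {V : Type} (E : V → V → Prop) (lab : V → Fin 3 → Bool) (u z : V) : Prop :=
  ∃ w v, GadPath E lab u w v z

/-- Condition φ₁: every node satisfies exactly one of `P₁, P₂, P₃`. -/
def phi1 {V : Type} (lab : V → Fin 3 → Bool) : Prop :=
  ∀ v : V,
    (lab v 0 = true ∧ lab v 1 = false ∧ lab v 2 = false) ∨
    (lab v 0 = false ∧ lab v 1 = true ∧ lab v 2 = false) ∨
    (lab v 0 = false ∧ lab v 1 = false ∧ lab v 2 = true)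

/-- Condition φ₂: every `P₂`-node has exactly two neighbours, exactly one of them a
`P₁`-node and exactly one a `P₃`-node; every `P₃`-node has exactly two neighbours, exactly
one a `P₁`-node and exactly one a `P₂`-node; and no two `P₁`-nodes are adjacent. -/
def phi2 {V : Type} [Fintype V] (E : V → V → Prop) (lab : V → Fin 3 → Bool) : Prop :=
  (∀ v : V, lab v 1 = true →
    Nat.card {w | E v w} = 2 ∧ Nat.card {w | E v w ∧ lab w 0 = true} = 1 ∧
      Nat.card {w | E v w ∧ lab w 2 = true} = 1) ∧
  (∀ v : V, lab v 2 = true →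
    Nat.card {w | E v w} = 2 ∧ Nat.card {w | E v w ∧ lab w 0 = true} = 1 ∧
      Nat.card {w | E v w ∧ lab w 1 = true} = 1) ∧
  (∀ u v : V, lab u 0 = true → lab v 0 = true → ¬ E u v)

/-- Condition φ₃: between any two distinct `P₁`-nodes there is exactly one gadgetised edge
in total (from `u` to `z` or from `z` to `u`). -/
def phi3 {V : Type} [Fintype V] (E : V → V → Prop) (lab : V → Fin 3 → Bool) : Prop :=
  ∀ u z : V, lab u 0 = true → lab z 0 = true → u ≠ z →
    Nat.card {p : V × V | GadPath E lab u p.1 p.2 z} +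
      Nat.card {p : V × V | GadPath E lab z p.1 p.2 u} = 1

/-- Condition φ₄: there is no triangle of gadgetised edges. -/
def phi4 {V : Type} (E : V → V → Prop) (lab : V → Fin 3 → Bool) : Prop :=
  ¬ ∃ u v w : V, GadEdge E lab u v ∧ GadEdge E lab v w ∧ GadEdge E lab w u

/-- `N₂ u`: the number of neighbours of `u` satisfying `P₂`. -/
noncomputable def N2 {V : Type} [Fintype V] (E : V → V → Prop) (lab : V → Fin 3 → Bool)
    (u : V) : ℕ :=
  Nat.card {w | E u w ∧ lab w 1 = true}

/-- Condition ψ: for all `0 ≤ i < j < |P₁|` there are `P₁`-nodes `u, w` with `N₂ u = j`,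
`N₂ w = i` and a gadgetised edge from `u` to `w`. -/
def psiCond {V : Type} [Fintype V] (E : V → V → Prop) (lab : V → Fin 3 → Bool) : Prop :=
  ∀ i j : ℕ, i < j → j < Nat.card {v : V | lab v 0 = true} →
    ∃ u w : V, lab u 0 = true ∧ lab w 0 = true ∧
      N2 E lab u = j ∧ N2 E lab w = i ∧ GadEdge E lab u w

/-- The multiset `⟦f w : w ∈ V, p w⟧` of values of `f` on the elements satisfying `p`. -/
noncomputable def msetOf {V α : Type} [Fintype V] (p : V → Prop) (f : V → α) : Multiset α :=
  letI := Classical.decPred p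
  ((Finset.univ.filter p).val.map f)

/-- An undirected ACR-GNN layer: an aggregation over the neighbourhood and a global
readout (both mapping finite multisets of real vectors to real vectors), and a combination
function. -/
structure UACRLayer (din dout : ℕ) where
  m1 : ℕ
  m2 : ℕ
  agg : Multiset (Fin din → ℝ) → Fin m1 → ℝ
  read : Multiset (Fin din → ℝ) → Fin m2 → ℝ
  comb : (Fin din → ℝ) → (Fin m1 → ℝ) → (Fin m2 → ℝ) → Fin dout → ℝ

/-- Applying an undirected ACR-GNN layer to an undirected graph with features `f`:
`λ'(v) = comb(λ(v), agg(⟦λ(w) : w ∈ N(v)⟧), read(⟦λ(w) : w ∈ V⟧))`. -/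
noncomputable def UACRLayer.apply {din dout : ℕ} (L : UACRLayer din dout)
    {V : Type} [Fintype V] (E : V → V → Prop) (f : V → Fin din → ℝ) :
    V → Fin dout → ℝ :=
  fun v => L.comb (f v)
    (L.agg (msetOf (fun w => E v w) f))
    (L.read (msetOf (fun _ => True) f))

/-- A finite sequence of undirected ACR-GNN layers of matching dimensions, from input
dimension `d₁` to output dimension `d₂`. -/
inductive UACRNet : ℕ → ℕ → Type
  | nil {d : ℕ} : UACRNet d d
  | cons {d₁ d₂ d₃ : ℕ} : UACRLayer d₁ d₂ → UACRNet d₂ d₃ → UACRNet d₁ d₃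

/-- Evaluating a sequence of undirected ACR-GNN layers on an undirected graph. -/
noncomputable def UACRNet.eval {V : Type} [Fintype V] (E : V → V → Prop) :
    {d₁ d₂ : ℕ} → UACRNet d₁ d₂ → (V → Fin d₁ → ℝ) → V → Fin d₂ → ℝ
  | _, _, .nil, f => f
  | _, _, .cons L net, f => UACRNet.eval E net (L.apply E f)

/-- A `{0,1}`-label viewed as a real vector. -/
def boolVec {d : ℕ} (lab : Fin d → Bool) : Fin d → ℝ := fun i => if lab i then 1 else 0

theorem exists_embedding_multiset_real (d : ℕ) : Nonempty (Multiset (Fin d → ℝ) ↪ ℝ) := by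
  rw [← Cardinal.le_def]
  calc Cardinal.mk (Multiset (Fin d → ℝ)) ≤ Cardinal.mk (List (Fin d → ℝ)) :=
        Cardinal.mk_le_of_surjective Quot.mk_surjective
    _ ≤ max Cardinal.aleph0 (Cardinal.mk (Fin d → ℝ)) := Cardinal.mk_list_le_max _
    _ ≤ Cardinal.mk ℝ := by
        refine max_le (by simpa [Cardinal.mk_real] using Cardinal.aleph0_le_continuum) ?_
        simp only [Cardinal.mk_pi, Cardinal.mk_real, Cardinal.prod_const, Cardinal.lift_id]
        calc Cardinal.continuum ^ Cardinal.mk (Fin d)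
            ≤ Cardinal.continuum ^ Cardinal.aleph0 :=
              Cardinal.power_le_power_left Cardinal.continuum_ne_zero
                (Cardinal.lt_aleph0_of_finite _).le
          _ = Cardinal.continuum := Cardinal.continuum_power_aleph0

noncomputable def msetCode (d : ℕ) : Multiset (Fin d → ℝ) ↪ ℝ :=
  (exists_embedding_multiset_real d).some

noncomputable def msetDecode (d : ℕ) : ℝ → Multiset (Fin d → ℝ) :=
  Function.invFun (msetCode d)

@[simp]
theorem msetDecode_msetCode (d : ℕ) (M : Multiset (Fin d → ℝ)) :
    msetDecode d (msetCode d M) = M :=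
  Function.leftInverse_invFun (msetCode d).injective M

section msetOf

variable {V W α : Type} [Fintype V] [Fintype W]

@[simp]
theorem mem_msetOf {p : V → Prop} {f : V → α} {a : α} :
    a ∈ msetOf p f ↔ ∃ v, p v ∧ f v = a := by
  simp [msetOf]

theorem forall_mem_msetOf {p : V → Prop} {f : V → α} {P : α → Prop} :
    (∀ a ∈ msetOf p f, P a) ↔ ∀ v, p v → P (f v) := by
  simp

theorem exists_mem_msetOf {p : V → Prop} {f : V → α} {P : α → Prop} :
    (∃ a ∈ msetOf p f, P a) ↔ ∃ v, p v ∧ P (f v) := by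
  simp

@[simp]
theorem countP_msetOf (p : V → Prop) (f : V → α) (q : α → Prop) [DecidablePred q] :
    Multiset.countP q (msetOf p f) = Nat.card {v | p v ∧ q (f v)} := by
  classical
  simp [msetOf, Multiset.countP_map, Finset.card_def, and_comm]

@[simp]
theorem card_msetOf (p : V → Prop) (f : V → α) :
    Multiset.card (msetOf p f) = Nat.card {v | p v} := by
  classical
  simp [msetOf, Finset.card_def]

theorem msetOf_comp_equiv (e : V ≃ W) (p : W → Prop) (f : W → α) :
    msetOf (p ∘ e) (f ∘ e) = msetOf p f := by
  classical
  simp only [msetOf]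
  rw [← Finset.univ_map_equiv_to_embedding e, Finset.filter_map, Finset.map_val,
    Multiset.map_map]
  rfl

end msetOf

section WeisfeilerLeman

variable {V W : Type} [Fintype V] [Fintype W]

noncomputable def wlStep {n : ℕ} (E : V → V → Prop) (f : V → Fin n → ℝ) :
    V → Fin (n + 1) → ℝ :=
  fun v => Fin.snoc (f v) (msetCode n (msetOf (E v) f))

theorem wlStep_comp_equiv {n : ℕ} (e : V ≃ W) {E : V → V → Prop} {E' : W → W → Prop}
    (hE : ∀ u v, E u v ↔ E' (e u) (e v)) {f : V → Fin n → ℝ} {f' : W → Fin n → ℝ}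
    (hf : f' ∘ e = f) : wlStep E' f' ∘ e = wlStep E f := by
  subst hf
  funext v
  have hnbr : E' (e v) ∘ e = E v := funext fun w => propext (hE v w).symm
  simp only [Function.comp_apply, wlStep, ← hnbr, msetOf_comp_equiv]

/-- Coordinates `0, 1, 2` of a colour after `k` rounds hold the label, and coordinate `3 + j`
codes the multiset of the neighbours' colours after `j` rounds. -/
noncomputable def wlColours (E : V → V → Prop) (lab : V → Fin 3 → Bool) :
    (k : ℕ) → V → Fin (3 + k) → ℝ
  | 0 => fun v => boolVec (lab v)
  | k + 1 => wlStep E (wlColours E lab k)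

theorem msetOf_wlColours_eq_of_iso {E : V → V → Prop} {lab : V → Fin 3 → Bool}
    {E' : W → W → Prop} {lab' : W → Fin 3 → Bool} (h : IsoLabGraph E lab E' lab')
    (k : ℕ) :
    msetOf (fun _ => True) (wlColours E lab k) = msetOf (fun _ => True) (wlColours E' lab' k) := by
  obtain ⟨e, hE, hlab⟩ := h
  have hcomp : ∀ k, wlColours E' lab' k ∘ e = wlColours E lab k := by
    intro k
    induction k with
    | zero => exact funext fun v => by simp [wlColours, hlab]
    | succ k ih => exact wlStep_comp_equiv e hE ih
  rw [← hcomp, ← msetOf_comp_equiv e]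
  rfl

noncomputable def wlLayer (n : ℕ) : UACRLayer n (n + 1) :=
  ⟨1, 0, fun M _ => msetCode n M, fun _ => Fin.elim0, fun x a _ => Fin.snoc x (a 0)⟩

noncomputable def readoutLayer (n : ℕ) : UACRLayer n 1 :=
  ⟨0, 1, fun _ => Fin.elim0, fun M _ => msetCode n M, fun _ _ r => r⟩

noncomputable def gadLinNet : UACRNet 3 1 :=
  .cons (wlLayer 3) <| .cons (wlLayer 4) <| .cons (wlLayer 5) <| .cons (wlLayer 6) <|
    .cons (readoutLayer (3 + 4)) .nil

theorem eval_gadLinNet (E : V → V → Prop) (lab : V → Fin 3 → Bool) (v : V) :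
    UACRNet.eval E gadLinNet (fun w => boolVec (lab w)) v =
      fun _ => msetCode (3 + 4) (msetOf (fun _ => True) (wlColours E lab 4)) :=
  rfl

end WeisfeilerLeman

@[simp]
theorem boolVec_eq_one {d : ℕ} (l : Fin d → Bool) (i : Fin d) :
    boolVec l i = 1 ↔ l i = true := by
  cases h : l i <;> simp [boolVec, h]

@[simp]
theorem boolVec_eq_zero {d : ℕ} (l : Fin d → Bool) (i : Fin d) :
    boolVec l i = 0 ↔ l i = false := by
  cases h : l i <;> simp [boolVec, h]

section Colours

variable {V : Type} [Fintype V] (E : V → V → Prop) (lab : V → Fin 3 → Bool)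

def labelBit {k : ℕ} (x : Fin (3 + k) → ℝ) (i : Fin 3) : ℝ :=
  x (Fin.castLE (Nat.le_add_right 3 k) i)

noncomputable def nbrColours {k : ℕ} (x : Fin (3 + (k + 1)) → ℝ) :
    Multiset (Fin (3 + k) → ℝ) :=
  msetDecode (3 + k) (x (Fin.last (3 + k)))

noncomputable def nbrLabels {k : ℕ} (x : Fin (3 + (k + 1)) → ℝ) : Multiset (Fin 3 → ℝ) :=
  msetDecode 3 (x (Fin.castLE (by omega) (Fin.last 3)))

noncomputable def labelCount (M : Multiset (Fin 3 → ℝ)) (i : Fin 3) : ℕ :=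
  Multiset.countP (fun y => y i = 1) M

@[simp]
theorem labelBit_wlColours (k : ℕ) (v : V) (i : Fin 3) :
    labelBit (wlColours E lab k v) i = boolVec (lab v) i := by
  induction k with
  | zero => rfl
  | succ k ih =>
    exact (Fin.snoc_castSucc (α := fun _ => ℝ) (p := wlColours E lab k v) ..).trans ih

@[simp]
theorem nbrColours_wlColours (k : ℕ) (v : V) :
    nbrColours (wlColours E lab (k + 1) v) = msetOf (E v) (wlColours E lab k) := by
  simp [nbrColours, wlColours, wlStep]

@[simp]
theorem nbrLabels_wlColours (k : ℕ) (v : V) :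
    nbrLabels (wlColours E lab (k + 1) v) = msetOf (E v) fun w => boolVec (lab w) := by
  induction k with
  | zero => exact nbrColours_wlColours E lab 0 v
  | succ k ih =>
    exact (congrArg (msetDecode 3)
      (Fin.snoc_castSucc (α := fun _ => ℝ) (p := wlColours E lab (k + 1) v) ..)).trans ih

end Colours

/-- `N2_lt` rules out a single `P₁`-node carrying gadgets from itself to itself, which ψ
(vacuous when `|P₁| = 1`) does not see. -/
structure GadLinCriterion {V : Type} [Fintype V] (E : V → V → Prop)
    (lab : V → Fin 3 → Bool) : Prop where
  phi1 : phi1 lab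
  phi2 : phi2 E lab
  psi : psiCond E lab
  N2_lt : ∀ u, lab u 0 = true → N2 E lab u < Nat.card {v | lab v 0 = true}

def GadLinColours (M : Multiset (Fin (3 + 4) → ℝ)) : Prop :=
  (∀ x ∈ M, (labelBit x 0 = 1 ∧ labelBit x 1 = 0 ∧ labelBit x 2 = 0) ∨
    (labelBit x 0 = 0 ∧ labelBit x 1 = 1 ∧ labelBit x 2 = 0) ∨
    (labelBit x 0 = 0 ∧ labelBit x 1 = 0 ∧ labelBit x 2 = 1)) ∧
  (∀ x ∈ M, labelBit x 1 = 1 → Multiset.card (nbrLabels x) = 2 ∧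
    labelCount (nbrLabels x) 0 = 1 ∧ labelCount (nbrLabels x) 2 = 1) ∧
  (∀ x ∈ M, labelBit x 2 = 1 → Multiset.card (nbrLabels x) = 2 ∧
    labelCount (nbrLabels x) 0 = 1 ∧ labelCount (nbrLabels x) 1 = 1) ∧
  (∀ x ∈ M, labelBit x 0 = 1 → ∀ y ∈ nbrLabels x, y 0 = 1 → False) ∧
  (∀ i j : ℕ, i < j → j < M.countP (fun x => labelBit x 0 = 1) →
    ∃ x ∈ M, labelBit x 0 = 1 ∧ labelCount (nbrLabels x) 1 = j ∧
      ∃ y ∈ nbrColours x, labelBit y 1 = 1 ∧ ∃ z ∈ nbrColours y, labelBit z 2 = 1 ∧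
        ∃ t ∈ nbrColours z, labelBit t 0 = 1 ∧ labelCount (nbrLabels t) 1 = i) ∧
  ∀ x ∈ M, labelBit x 0 = 1 →
    labelCount (nbrLabels x) 1 < M.countP (fun x => labelBit x 0 = 1)

theorem gadLinColours_wlColours_iff {V : Type} [Fintype V] (E : V → V → Prop)
    (lab : V → Fin 3 → Bool) :
    GadLinColours (msetOf (fun _ => True) (wlColours E lab 4)) ↔ GadLinCriterion E lab := by
  simp only [GadLinColours, forall_mem_msetOf, exists_mem_msetOf, countP_msetOf, card_msetOf,
    labelBit_wlColours, nbrColours_wlColours, nbrLabels_wlColours, labelCount, boolVec_eq_one,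
    boolVec_eq_zero, true_and, forall_const]
  constructor
  · rintro ⟨h1, h2, h3, h4, h5, h6⟩
    refine ⟨h1, ⟨h2, h3, fun u w hu hw huw => h4 u hu w huw hw⟩, fun i j hij hj => ?_, h6⟩
    obtain ⟨u, hu, hNu, b, hub, hb, c, hbc, hc, w, hcw, hw, hNw⟩ := h5 i j hij hj
    exact ⟨u, w, hu, hw, hNu, hNw, b, c, hu, hb, hc, hw, hub, hbc, hcw⟩
  · rintro ⟨h1, ⟨h2, h3, h4⟩, h5, h6⟩
    refine ⟨h1, h2, h3, fun u hu w huw hw => h4 u w hu hw huw, fun i j hij hj => ?_, h6⟩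
    obtain ⟨u, w, hu, hw, hNu, hNw, b, c, -, hb, hc, -, hub, hbc, hcw⟩ := h5 i j hij hj
    exact ⟨u, hu, hNu, b, hub, hb, c, hbc, hc, w, hcw, hw, hNw⟩

theorem natCard_setOf_eq_one_of_iff {α : Type*} {P : α → Prop} {a : α}
    (h : ∀ w, P w ↔ w = a) : Nat.card {w | P w} = 1 := by
  rw [show {w | P w} = {a} from Set.ext h]
  simp

theorem natCard_setOf_eq_two_of_iff {α : Type*} {P : α → Prop} {a c : α} (hac : a ≠ c)
    (h : ∀ w, P w ↔ w = a ∨ w = c) : Nat.card {w | P w} = 2 := by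
  rw [show {w | P w} = {a, c} from Set.ext h, Nat.card_coe_set_eq, Set.ncard_pair hac]

-- `GadV` is a plain `def`, so `simp` does not see `Sum.inl`/`Sum.inr` at this type; its nodes
-- `v¹_u`, `v²_e`, `v³_e` get their own names and simp lemmas.
namespace GadV

variable {U : Type} {R : U → U → Prop}

def v1 (u : U) : GadV R := Sum.inl u

def v2 (e : {p : U × U // R p.1 p.2}) : GadV R := Sum.inr (e, false)

def v3 (e : {p : U × U // R p.1 p.2}) : GadV R := Sum.inr (e, true)

@[elab_as_elim]
theorem ind {P : GadV R → Prop} (v1 : ∀ u, P (v1 u)) (v2 : ∀ e, P (v2 e))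
    (v3 : ∀ e, P (v3 e)) (x : GadV R) : P x := by
  rcases x with u | ⟨e, _ | _⟩
  exacts [v1 u, v2 e, v3 e]

variable {u u' : U} {e e' : {p : U × U // R p.1 p.2}}

@[simp] theorem v1_inj : (v1 u : GadV R) = v1 u' ↔ u = u' := Sum.inl_injective.eq_iff
@[simp] theorem v2_inj : v2 e = v2 e' ↔ e = e' := Sum.inr_injective.eq_iff.trans (by simp)
@[simp] theorem v3_inj : v3 e = v3 e' ↔ e = e' := Sum.inr_injective.eq_iff.trans (by simp)
@[simp] theorem v1_ne_v2 : v1 u ≠ v2 e := Sum.inl_ne_inr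
@[simp] theorem v1_ne_v3 : v1 u ≠ v3 e := Sum.inl_ne_inr
@[simp] theorem v2_ne_v1 : v2 e ≠ v1 u := Sum.inr_ne_inl
@[simp] theorem v2_ne_v3 : v2 e ≠ v3 e' :=
  fun h => Bool.false_ne_true (congrArg Prod.snd (Sum.inr_injective h))

@[simp] theorem gadLab_v1 : gadLab R (v1 u) = fun i => decide (i = 0) := rfl
@[simp] theorem gadLab_v2 : gadLab R (v2 e) = fun i => decide (i = 1) := rfl
@[simp] theorem gadLab_v3 : gadLab R (v3 e) = fun i => decide (i = 2) := rfl

@[simp] theorem gadAdj_v1_v1 : gadAdj R (v1 u) (v1 u') ↔ False := Iff.rfl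
@[simp] theorem gadAdj_v1_v2 : gadAdj R (v1 u) (v2 e) ↔ e.1.1 = u := by simp [gadAdj, v1, v2]
@[simp] theorem gadAdj_v1_v3 : gadAdj R (v1 u) (v3 e) ↔ e.1.2 = u := by simp [gadAdj, v1, v3]
@[simp] theorem gadAdj_v2_v1 : gadAdj R (v2 e) (v1 u) ↔ e.1.1 = u := by simp [gadAdj, v1, v2]
@[simp] theorem gadAdj_v3_v1 : gadAdj R (v3 e) (v1 u) ↔ e.1.2 = u := by simp [gadAdj, v1, v3]
@[simp] theorem gadAdj_v2_v2 : gadAdj R (v2 e) (v2 e') ↔ False := by simp [gadAdj, v2]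
@[simp] theorem gadAdj_v2_v3 : gadAdj R (v2 e) (v3 e') ↔ e = e' := by simp [gadAdj, v2, v3]
@[simp] theorem gadAdj_v3_v2 : gadAdj R (v3 e) (v2 e') ↔ e = e' := by simp [gadAdj, v2, v3]
@[simp] theorem gadAdj_v3_v3 : gadAdj R (v3 e) (v3 e') ↔ False := by simp [gadAdj, v3]

end GadV

open GadV

section Gadget

variable {U : Type} {R : U → U → Prop}

theorem gadAdj_comm (x y : GadV R) : gadAdj R x y ↔ gadAdj R y x := by
  induction x using GadV.ind <;> induction y using GadV.ind <;> simp [eq_comm]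

theorem gadAdj_v2_iff (e : {p : U × U // R p.1 p.2}) (x : GadV R) :
    gadAdj R (v2 e) x ↔ x = v1 e.1.1 ∨ x = v3 e := by
  induction x using GadV.ind <;> simp [eq_comm]

theorem gadAdj_v3_iff (e : {p : U × U // R p.1 p.2}) (x : GadV R) :
    gadAdj R (v3 e) x ↔ x = v1 e.1.2 ∨ x = v2 e := by
  induction x using GadV.ind <;> simp [eq_comm]

theorem natCard_gad_label_zero :
    Nat.card {x : GadV R | gadLab R x 0 = true} = Nat.card U := by
  have hrange : {x : GadV R | gadLab R x 0 = true} = Set.range v1 := by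
    ext x
    induction x using GadV.ind <;> simp
  rw [hrange, Nat.card_range_of_injective fun _ _ => v1_inj.1]

variable [Fintype U]

theorem N2_gad_v1 (u : U) : N2 (gadAdj R) (gadLab R) (v1 u) = Nat.card {w | R u w} := by
  have hrange : {x | gadAdj R (v1 u) x ∧ gadLab R x 1 = true} =
      Set.range fun w : {w // R u w} => (v2 ⟨(u, w), w.2⟩ : GadV R) := by
    ext x
    induction x using GadV.ind with
    | v1 u' => simp
    | v2 e =>
      simp only [gadAdj_v1_v2, gadLab_v2, decide_true, and_true, Set.mem_ofPred_eq, Set.mem_range,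
        v2_inj]
      exact ⟨fun h => ⟨⟨e.1.2, h ▸ e.2⟩, by subst h; rfl⟩, fun ⟨w, hw⟩ => hw ▸ rfl⟩
    | v3 e => simp
  rw [N2, hrange, Nat.card_range_of_injective]
  · rfl
  · intro w w' h
    exact Subtype.ext (by simpa using h)

end Gadget

namespace IsStrictLinearOrderRel

variable {U : Type} [Finite U] {R : U → U → Prop}

theorem outDegree_lt_of_rel (hR : IsStrictLinearOrderRel R) {u w : U} (h : R u w) :
    Nat.card {x | R w x} < Nat.card {x | R u x} := by
  simp only [Nat.card_coe_set_eq]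
  refine Set.ncard_lt_ncard ⟨fun x hx => hR.2.1 u w x h hx, fun hsub => hR.1 w (hsub h)⟩
    (Set.toFinite _)

theorem rel_iff_outDegree_lt (hR : IsStrictLinearOrderRel R) {u w : U} :
    R u w ↔ Nat.card {x | R w x} < Nat.card {x | R u x} := by
  refine ⟨hR.outDegree_lt_of_rel, fun hlt => ?_⟩
  have hne : u ≠ w := by
    rintro rfl
    exact lt_irrefl _ hlt
  exact (hR.2.2 u w hne).resolve_right fun h => (hR.outDegree_lt_of_rel h).not_gt hlt

theorem outDegree_lt_card (hR : IsStrictLinearOrderRel R) (u : U) :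
    Nat.card {x | R u x} < Nat.card U := by
  rw [Nat.card_coe_set_eq, ← Set.ncard_univ]
  exact Set.ncard_lt_ncard (Set.ssubset_univ_iff.2 fun h => hR.1 u (Set.eq_univ_iff_forall.1 h u))

theorem outDegree_bijective (hR : IsStrictLinearOrderRel R) :
    Function.Bijective fun u => (⟨Nat.card {x | R u x}, hR.outDegree_lt_card u⟩ :
      Fin (Nat.card U)) := by
  refine (Nat.bijective_iff_injective_and_card _).2 ⟨fun u w huw => ?_, by simp⟩
  by_contra hne
  have hdeg : Nat.card {x | R u x} = Nat.card {x | R w x} := congrArg Fin.val huw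
  rcases hR.2.2 u w hne with h | h
  · exact (hR.outDegree_lt_of_rel h).ne' hdeg
  · exact (hR.outDegree_lt_of_rel h).ne hdeg

end IsStrictLinearOrderRel

theorem gadLinCriterion_gad {U : Type} [Fintype U] {R : U → U → Prop}
    (hR : IsStrictLinearOrderRel R) : GadLinCriterion (gadAdj R) (gadLab R) where
  phi1 x := by induction x using GadV.ind <;> simp
  phi2 := by
    refine ⟨fun x hx => ?_, fun x hx => ?_, fun x y hx hy => ?_⟩
    · induction x using GadV.ind with
      | v2 e =>
        refine ⟨natCard_setOf_eq_two_of_iff v1_ne_v3 (gadAdj_v2_iff e),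
          natCard_setOf_eq_one_of_iff (a := v1 e.1.1) fun y => ?_,
          natCard_setOf_eq_one_of_iff (a := v3 e) fun y => ?_⟩ <;>
        induction y using GadV.ind <;> simp [eq_comm]
      | _ => simp at hx
    · induction x using GadV.ind with
      | v3 e =>
        refine ⟨natCard_setOf_eq_two_of_iff v1_ne_v2 (gadAdj_v3_iff e),
          natCard_setOf_eq_one_of_iff (a := v1 e.1.2) fun y => ?_,
          natCard_setOf_eq_one_of_iff (a := v2 e) fun y => ?_⟩ <;>
        induction y using GadV.ind <;> simp [eq_comm]
      | _ => simp at hx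
    · induction x using GadV.ind <;> induction y using GadV.ind <;> simp_all
  psi i j hij hj := by
    rw [natCard_gad_label_zero] at hj
    obtain ⟨u, hu⟩ := hR.outDegree_bijective.2 ⟨j, hj⟩
    obtain ⟨w, hw⟩ := hR.outDegree_bijective.2 ⟨i, hij.trans hj⟩
    simp only [Fin.mk.injEq] at hu hw
    have huw : R u w := hR.rel_iff_outDegree_lt.2 (by omega)
    exact ⟨v1 u, v1 w, rfl, rfl, by rw [N2_gad_v1, hu], by rw [N2_gad_v1, hw],
      v2 ⟨(u, w), huw⟩, v3 ⟨(u, w), huw⟩, rfl, rfl, rfl, rfl, by simp, by simp, by simp⟩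
  N2_lt x hx := by
    induction x using GadV.ind with
    | v1 u => rw [N2_gad_v1, natCard_gad_label_zero]; exact hR.outDegree_lt_card u
    | _ => simp at hx

theorem injective_and_lt_of_forall_lt_exists {α : Type*} [Finite α] {g : α → ℕ}
    (h : ∀ k < Nat.card α, ∃ a, g a = k) :
    Function.Injective g ∧ ∀ a, g a < Nat.card α := by
  choose s hs using h
  let s' : Fin (Nat.card α) → α := fun k => s k k.2
  have hs'inj : Function.Injective s' := fun k k' hkk' =>
    Fin.ext ((hs k k.2).symm.trans ((congrArg g hkk').trans (hs k' k'.2)))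
  have hs'surj := (hs'inj.bijective_of_nat_card_le (by simp)).2
  refine ⟨fun a a' haa' => ?_, fun a => ?_⟩
  · obtain ⟨k, rfl⟩ := hs'surj a
    obtain ⟨k', rfl⟩ := hs'surj a'
    exact congrArg s' (Fin.ext ((hs k k.2).symm.trans (haa'.trans (hs k' k'.2))))
  · obtain ⟨k, rfl⟩ := hs'surj a
    exact (hs k k.2).symm ▸ k.2

theorem isStrictLinearOrderRel_of_injective {α : Type} {f : α → ℕ}
    (hf : Function.Injective f) :
    IsStrictLinearOrderRel fun a b => f b < f a :=
  ⟨fun _ => lt_irrefl _, fun _ _ _ h h' => h'.trans h,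
    fun _ _ hne => (lt_or_gt_of_ne (hf.ne hne)).symm⟩

section Recognition

variable {V : Type} {E : V → V → Prop} {lab : V → Fin 3 → Bool}

theorem label_eq_of_phi1 (h1 : phi1 lab) {v : V} {i : Fin 3} (hv : lab v i = true) :
    lab v = fun j => decide (j = i) := by
  funext j
  rcases h1 v with ⟨h0, h1, h2⟩ | ⟨h0, h1, h2⟩ | ⟨h0, h1, h2⟩ <;> fin_cases i <;>
    fin_cases j <;> simp_all

theorem eq_of_label_of_phi1 (h1 : phi1 lab) {v : V} {i j : Fin 3} (hi : lab v i = true)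
    (hj : lab v j = true) : j = i := by
  simpa [label_eq_of_phi1 h1 hi] using hj

/-- Meaningful only when `v` has exactly one `P_i`-neighbour; the witness `⟨v⟩` of
`Nonempty V` avoids assuming it globally. -/
noncomputable def nbrWith (E : V → V → Prop) (lab : V → Fin 3 → Bool) (i : Fin 3) (v : V) :
    V :=
  @Classical.epsilon V ⟨v⟩ fun w => E v w ∧ lab w i = true

theorem adj_and_label_iff_eq_nbrWith {v : V} {i : Fin 3}
    (h : Nat.card {w | E v w ∧ lab w i = true} = 1) (w : V) :
    E v w ∧ lab w i = true ↔ w = nbrWith E lab i v := by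
  rw [Nat.card_coe_set_eq, Set.ncard_eq_one] at h
  obtain ⟨a, ha⟩ := h
  have hmem : ∀ w, E v w ∧ lab w i = true ↔ w = a := fun w => Set.ext_iff.1 ha w
  have hnbr : nbrWith E lab i v = a := (hmem _).1
    (Classical.epsilon_spec (p := fun w => E v w ∧ lab w i = true) ⟨a, (hmem a).2 rfl⟩)
  rw [hmem, hnbr]

theorem nbrWith_spec {v : V} {i : Fin 3} (h : Nat.card {w | E v w ∧ lab w i = true} = 1) :
    E v (nbrWith E lab i v) ∧ lab (nbrWith E lab i v) i = true :=
  (adj_and_label_iff_eq_nbrWith h _).2 rfl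

theorem adj_iff_eq_nbrWith_or [Finite V] (h1 : phi1 lab) {v : V} {i j : Fin 3} (hij : i ≠ j)
    (hv : Nat.card {w | E v w} = 2 ∧ Nat.card {w | E v w ∧ lab w i = true} = 1 ∧
      Nat.card {w | E v w ∧ lab w j = true} = 1) (w : V) :
    E v w ↔ w = nbrWith E lab i v ∨ w = nbrWith E lab j v := by
  obtain ⟨hdeg, hi, hj⟩ := hv
  have hne : nbrWith E lab i v ≠ nbrWith E lab j v := fun h =>
    hij (eq_of_label_of_phi1 h1 (h ▸ (nbrWith_spec hj).2) (nbrWith_spec hi).2)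
  have hnbrs : {nbrWith E lab i v, nbrWith E lab j v} = {w | E v w} := by
    refine Set.eq_of_subset_of_ncard_le ?_ ?_ (Set.toFinite _)
    · rintro w (rfl | rfl)
      exacts [(nbrWith_spec hi).1, (nbrWith_spec hj).1]
    · rw [← Nat.card_coe_set_eq, hdeg, Set.ncard_pair hne]
  exact (Set.ext_iff.1 hnbrs w).symm

noncomputable def edgeSrc (E : V → V → Prop) (lab : V → Fin 3 → Bool) (b : V) : V :=
  nbrWith E lab 0 b

noncomputable def edgeMid (E : V → V → Prop) (lab : V → Fin 3 → Bool) (b : V) : V :=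
  nbrWith E lab 2 b

noncomputable def edgeTgt (E : V → V → Prop) (lab : V → Fin 3 → Bool) (b : V) : V :=
  nbrWith E lab 0 (edgeMid E lab b)

variable [Fintype V] {b c u w : V}

theorem adj_iff_of_label_one (h1 : phi1 lab) (h2 : phi2 E lab) (hb : lab b 1 = true) (w : V) :
    E b w ↔ w = edgeSrc E lab b ∨ w = edgeMid E lab b :=
  adj_iff_eq_nbrWith_or h1 (by decide) (h2.1 b hb) w

theorem adj_iff_of_label_two (h1 : phi1 lab) (h2 : phi2 E lab) (hc : lab c 2 = true) (w : V) :
    E c w ↔ w = nbrWith E lab 0 c ∨ w = nbrWith E lab 1 c :=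
  adj_iff_eq_nbrWith_or h1 (by decide) (h2.2.1 c hc) w

theorem edgeSrc_spec (h2 : phi2 E lab) (hb : lab b 1 = true) :
    E b (edgeSrc E lab b) ∧ lab (edgeSrc E lab b) 0 = true :=
  nbrWith_spec (h2.1 b hb).2.1

theorem edgeMid_spec (h2 : phi2 E lab) (hb : lab b 1 = true) :
    E b (edgeMid E lab b) ∧ lab (edgeMid E lab b) 2 = true :=
  nbrWith_spec (h2.1 b hb).2.2

theorem edgeTgt_spec (h2 : phi2 E lab) (hb : lab b 1 = true) :
    E (edgeMid E lab b) (edgeTgt E lab b) ∧ lab (edgeTgt E lab b) 0 = true :=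
  nbrWith_spec (h2.2.1 _ (edgeMid_spec h2 hb).2).2.1

theorem nbrWith_one_edgeMid (hsym : ∀ u v, E u v → E v u) (h2 : phi2 E lab)
    (hb : lab b 1 = true) :
    nbrWith E lab 1 (edgeMid E lab b) = b :=
  ((adj_and_label_iff_eq_nbrWith (h2.2.1 _ (edgeMid_spec h2 hb).2).2.2 b).1
    ⟨hsym _ _ (edgeMid_spec h2 hb).1, hb⟩).symm

theorem edgeMid_nbrWith_one (hsym : ∀ u v, E u v → E v u) (h2 : phi2 E lab)
    (hc : lab c 2 = true) :
    edgeMid E lab (nbrWith E lab 1 c) = c := by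
  obtain ⟨hcb, hb⟩ := nbrWith_spec (h2.2.1 c hc).2.2
  exact ((adj_and_label_iff_eq_nbrWith (h2.1 _ hb).2.2 c).1 ⟨hsym _ _ hcb, hc⟩).symm

theorem eq_edgeSrc_iff (hsym : ∀ u v, E u v → E v u) (h2 : phi2 E lab) (hb : lab b 1 = true)
    (hu : lab u 0 = true) : edgeSrc E lab b = u ↔ E u b := by
  rw [eq_comm, edgeSrc, ← adj_and_label_iff_eq_nbrWith (h2.1 b hb).2.1, and_iff_left hu]
  exact ⟨hsym _ _, hsym _ _⟩

theorem gadEdge_iff (hsym : ∀ u v, E u v → E v u) (h2 : phi2 E lab) :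
    GadEdge E lab u w ↔
      ∃ b, lab b 1 = true ∧ edgeSrc E lab b = u ∧ edgeTgt E lab b = w := by
  constructor
  · rintro ⟨b, c, hu, hb, hc, hw, hub, hbc, hcw⟩
    have hmid : c = edgeMid E lab b :=
      (adj_and_label_iff_eq_nbrWith (h2.1 b hb).2.2 c).1 ⟨hbc, hc⟩
    refine ⟨b, hb, (eq_edgeSrc_iff hsym h2 hb hu).2 hub, ?_⟩
    rw [edgeTgt, ← hmid]
    exact ((adj_and_label_iff_eq_nbrWith (h2.2.1 c hc).2.1 w).1 ⟨hcw, hw⟩).symm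
  · rintro ⟨b, hb, rfl, rfl⟩
    exact ⟨b, edgeMid E lab b, (edgeSrc_spec h2 hb).2, hb, (edgeMid_spec h2 hb).2,
      (edgeTgt_spec h2 hb).2, hsym _ _ (edgeSrc_spec h2 hb).1, (edgeMid_spec h2 hb).1,
      (edgeTgt_spec h2 hb).1⟩

theorem N2_eq_natCard_edgeSrc (hsym : ∀ u v, E u v → E v u) (h2 : phi2 E lab)
    (hu : lab u 0 = true) :
    N2 E lab u = Nat.card {b | lab b 1 = true ∧ edgeSrc E lab b = u} := by
  refine Nat.card_congr (Equiv.subtypeEquivRight fun b => ?_)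
  exact ⟨fun ⟨hub, hb⟩ => ⟨hb, (eq_edgeSrc_iff hsym h2 hb hu).2 hub⟩,
    fun ⟨hb, hsrc⟩ => ⟨(eq_edgeSrc_iff hsym h2 hb hu).1 hsrc, hb⟩⟩

end Recognition

namespace GadLinCriterion

variable {V : Type} [Fintype V] {E : V → V → Prop} {lab : V → Fin 3 → Bool} {u w : V}

theorem eq_of_N2_eq (h : GadLinCriterion E lab) (hu : lab u 0 = true) (hw : lab w 0 = true)
    (huw : N2 E lab u = N2 E lab w) : u = w := by
  have hsurj : ∀ k < Nat.card {v | lab v 0 = true},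
      ∃ a : {v | lab v 0 = true}, N2 E lab a = k := by
    intro k hk
    rcases k with _ | k
    · by_cases hn : 1 < Nat.card {v | lab v 0 = true}
      · obtain ⟨-, w, -, hw, -, hNw, -⟩ := h.psi 0 1 one_pos hn
        exact ⟨⟨w, hw⟩, hNw⟩
      · obtain ⟨a⟩ := (Nat.card_pos_iff.1 hk).1
        exact ⟨a, by have := h.N2_lt a a.2; omega⟩
    · obtain ⟨u, -, hu, -, hNu, -⟩ := h.psi 0 (k + 1) k.succ_pos hk
      exact ⟨⟨u, hu⟩, hNu⟩
  exact congrArg Subtype.val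
    ((injective_and_lt_of_forall_lt_exists hsurj).1 (a₁ := ⟨u, hu⟩) (a₂ := ⟨w, hw⟩) huw)

theorem injective_and_lt_N2_edgeTgt (h : GadLinCriterion E lab) (hsym : ∀ u v, E u v → E v u)
    (hu : lab u 0 = true) :
    Function.Injective (fun b : {b | lab b 1 = true ∧ edgeSrc E lab b = u} =>
        N2 E lab (edgeTgt E lab b)) ∧
      ∀ b : {b | lab b 1 = true ∧ edgeSrc E lab b = u},
        N2 E lab (edgeTgt E lab b) < N2 E lab u := by
  rw [N2_eq_natCard_edgeSrc hsym h.phi2 hu]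
  refine injective_and_lt_of_forall_lt_exists fun k hk => ?_
  rw [← N2_eq_natCard_edgeSrc hsym h.phi2 hu] at hk
  obtain ⟨u', w, hu', -, hNu', hNw, hgad⟩ := h.psi k (N2 E lab u) hk (h.N2_lt u hu)
  obtain rfl := h.eq_of_N2_eq hu' hu hNu'
  obtain ⟨b, hb, hsrc, rfl⟩ := (gadEdge_iff hsym h.phi2).1 hgad
  exact ⟨⟨b, hb, hsrc⟩, hNw⟩

theorem gadEdge_iff_N2_lt (h : GadLinCriterion E lab) (hsym : ∀ u v, E u v → E v u)
    (hu : lab u 0 = true) (hw : lab w 0 = true) :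
    GadEdge E lab u w ↔ N2 E lab w < N2 E lab u := by
  constructor
  · intro hgad
    obtain ⟨b, hb, rfl, rfl⟩ := (gadEdge_iff hsym h.phi2).1 hgad
    exact (h.injective_and_lt_N2_edgeTgt hsym hu).2 ⟨b, hb, rfl⟩
  · intro hlt
    obtain ⟨u', w', hu', hw', hNu, hNw, hgad⟩ := h.psi _ _ hlt (h.N2_lt u hu)
    rwa [h.eq_of_N2_eq hu' hu hNu, h.eq_of_N2_eq hw' hw hNw] at hgad

theorem exists_edgeEquiv (h : GadLinCriterion E lab) (hsym : ∀ u v, E u v → E v u) :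
    ∃ eqv : {b // lab b 1 = true} ≃
        {p : {v // lab v 0 = true} × {v // lab v 0 = true} // GadEdge E lab p.1 p.2},
      ∀ b, ((eqv b).1.1 : V) = edgeSrc E lab b ∧ ((eqv b).1.2 : V) = edgeTgt E lab b := by
  let f : {b // lab b 1 = true} →
      {p : {v // lab v 0 = true} × {v // lab v 0 = true} // GadEdge E lab p.1 p.2} := fun b =>
    ⟨(⟨edgeSrc E lab b, (edgeSrc_spec h.phi2 b.2).2⟩,
        ⟨edgeTgt E lab b, (edgeTgt_spec h.phi2 b.2).2⟩),
      (gadEdge_iff hsym h.phi2).2 ⟨b, b.2, rfl, rfl⟩⟩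
  have hinj : Function.Injective f := by
    intro b b' hbb'
    have hsrc : edgeSrc E lab b' = edgeSrc E lab b := (congrArg (fun p => (p.1.1 : V)) hbb').symm
    have htgt : edgeTgt E lab b = edgeTgt E lab b' := congrArg (fun p => (p.1.2 : V)) hbb'
    have hfib := (h.injective_and_lt_N2_edgeTgt hsym (edgeSrc_spec h.phi2 b.2).2).1
      (a₁ := ⟨b, b.2, rfl⟩) (a₂ := ⟨b', b'.2, hsrc⟩) (by simp only [htgt])
    exact Subtype.ext (by simpa using hfib)
  have hsurj : Function.Surjective f := by
    rintro ⟨⟨u, w⟩, hgad⟩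
    obtain ⟨b, hb, hsrc, htgt⟩ := (gadEdge_iff hsym h.phi2).1 hgad
    exact ⟨⟨b, hb⟩, Subtype.ext (Prod.ext (Subtype.ext hsrc) (Subtype.ext htgt))⟩
  exact ⟨Equiv.ofBijective f ⟨hinj, hsurj⟩, fun b => ⟨rfl, rfl⟩⟩

end GadLinCriterion

section Realize

variable {V : Type} {E : V → V → Prop} {lab : V → Fin 3 → Bool}
  {R : {v // lab v 0 = true} → {v // lab v 0 = true} → Prop}
  (eqv : {b // lab b 1 = true} ≃
    {p : {v // lab v 0 = true} × {v // lab v 0 = true} // R p.1 p.2})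

noncomputable def gadRealize (E : V → V → Prop) : GadV R → V :=
  Sum.elim Subtype.val fun p => if p.2 then edgeMid E lab (eqv.symm p.1) else eqv.symm p.1

variable (e : {p : {v // lab v 0 = true} × {v // lab v 0 = true} // R p.1 p.2})

@[simp] theorem gadRealize_v2 : gadRealize eqv E (v2 e) = eqv.symm e := rfl
@[simp] theorem gadRealize_v3 : gadRealize eqv E (v3 e) = edgeMid E lab (eqv.symm e) := rfl

variable [Fintype V]

theorem label_gadRealize (h1 : phi1 lab) (h2 : phi2 E lab) (x : GadV R) :
    lab (gadRealize eqv E x) = gadLab R x := by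
  induction x using GadV.ind with
  | v1 u => exact label_eq_of_phi1 h1 u.2
  | v2 e => exact label_eq_of_phi1 h1 (eqv.symm e).2
  | v3 e => exact label_eq_of_phi1 h1 (edgeMid_spec h2 (eqv.symm e).2).2

theorem gadRealize_injective (hsym : ∀ u v, E u v → E v u) (h1 : phi1 lab) (h2 : phi2 E lab) :
    Function.Injective (gadRealize eqv E) := by
  intro x y hxy
  have hlab : gadLab R x = gadLab R y := by
    rw [← label_gadRealize eqv h1 h2, ← label_gadRealize eqv h1 h2, hxy]
  have hlab0 := congrFun hlab 0
  have hlab1 := congrFun hlab 1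
  induction x using GadV.ind <;> induction y using GadV.ind <;> simp at hxy hlab0 hlab1 ⊢
  next u u' => exact Subtype.ext hxy
  next e e' => exact eqv.symm.injective (Subtype.ext hxy)
  next e e' =>
    have hback := congrArg (nbrWith E lab 1) hxy
    rw [nbrWith_one_edgeMid hsym h2 (eqv.symm e).2, nbrWith_one_edgeMid hsym h2 (eqv.symm e').2]
      at hback
    exact eqv.symm.injective (Subtype.ext hback)

theorem gadRealize_surjective (hsym : ∀ u v, E u v → E v u) (h1 : phi1 lab) (h2 : phi2 E lab) :
    Function.Surjective (gadRealize eqv E) := by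
  intro v
  rcases h1 v with ⟨hv, -, -⟩ | ⟨-, hv, -⟩ | ⟨-, -, hv⟩
  · exact ⟨v1 ⟨v, hv⟩, rfl⟩
  · exact ⟨v2 (eqv ⟨v, hv⟩), by simp⟩
  · have hb := (nbrWith_spec (h2.2.1 v hv).2.2).2
    exact ⟨v3 (eqv ⟨_, hb⟩), by simp [edgeMid_nbrWith_one hsym h2 hv]⟩

theorem adj_gadRealize_iff (hsym : ∀ u v, E u v → E v u) (h1 : phi1 lab) (h2 : phi2 E lab)
    (hsrc : ∀ b, ((eqv b).1.1 : V) = edgeSrc E lab b)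
    (htgt : ∀ b, ((eqv b).1.2 : V) = edgeTgt E lab b) (x y : GadV R) :
    E (gadRealize eqv E x) (gadRealize eqv E y) ↔ gadAdj R x y := by
  have hinj := gadRealize_injective eqv hsym h1 h2
  have hv2 : ∀ e y, E (gadRealize eqv E (v2 e)) (gadRealize eqv E y) ↔ gadAdj R (v2 e) y := by
    intro e y
    rw [gadAdj_v2_iff, ← hinj.eq_iff, ← hinj.eq_iff (b := v3 e), gadRealize_v2,
      adj_iff_of_label_one h1 h2 (eqv.symm e).2, ← hsrc, Equiv.apply_symm_apply]
    rfl
  have hv3 : ∀ e y, E (gadRealize eqv E (v3 e)) (gadRealize eqv E y) ↔ gadAdj R (v3 e) y := by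
    intro e y
    rw [gadAdj_v3_iff, ← hinj.eq_iff, ← hinj.eq_iff (b := v2 e), gadRealize_v3,
      adj_iff_of_label_two h1 h2 (edgeMid_spec h2 (eqv.symm e).2).2,
      nbrWith_one_edgeMid hsym h2 (eqv.symm e).2, ← edgeTgt, ← htgt, Equiv.apply_symm_apply]
    rfl
  induction x using GadV.ind with
  | v1 u =>
    induction y using GadV.ind with
    | v1 u' => exact iff_false_intro (h2.2.2 u u' u.2 u'.2)
    | v2 e => rw [gadAdj_comm, ← hv2]; exact ⟨hsym _ _, hsym _ _⟩
    | v3 e => rw [gadAdj_comm, ← hv3]; exact ⟨hsym _ _, hsym _ _⟩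
  | v2 e => exact hv2 e y
  | v3 e => exact hv3 e y

theorem isoLabGraph_gad_of_edgeEquiv (hsym : ∀ u v, E u v → E v u) (h1 : phi1 lab)
    (h2 : phi2 E lab) (hsrc : ∀ b, ((eqv b).1.1 : V) = edgeSrc E lab b)
    (htgt : ∀ b, ((eqv b).1.2 : V) = edgeTgt E lab b) :
    IsoLabGraph E lab (gadAdj R) (gadLab R) := by
  let F := Equiv.ofBijective (gadRealize eqv E)
    ⟨gadRealize_injective eqv hsym h1 h2, gadRealize_surjective eqv hsym h1 h2⟩
  have hF : ∀ v, gadRealize eqv E (F.symm v) = v := F.apply_symm_apply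
  refine ⟨F.symm, fun u v => ?_, fun v => ?_⟩
  · rw [← adj_gadRealize_iff eqv hsym h1 h2 hsrc htgt, hF, hF]
  · rw [← label_gadRealize eqv h1 h2, hF]

end Realize

theorem isGadLin_of_gadLinCriterion {V : Type} [Fintype V] {E : V → V → Prop}
    {lab : V → Fin 3 → Bool} (hsym : ∀ u v, E u v → E v u) (h : GadLinCriterion E lab) :
    IsGadLin E lab := by
  obtain ⟨eqv, heqv⟩ := h.exists_edgeEquiv hsym
  refine ⟨{v // lab v 0 = true}, Fintype.ofFinite _, fun u w => GadEdge E lab u w, ?_,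
    isoLabGraph_gad_of_edgeEquiv eqv hsym h.phi1 h.phi2 (fun b => (heqv b).1)
      (fun b => (heqv b).2)⟩
  have hR : (fun u w : {v // lab v 0 = true} => GadEdge E lab u w) =
      fun u w : {v // lab v 0 = true} => N2 E lab w < N2 E lab u :=
    funext₂ fun u w => propext (h.gadEdge_iff_N2_lt hsym u.2 w.2)
  rw [hR]
  exact isStrictLinearOrderRel_of_injective fun u w huw => Subtype.ext (h.eq_of_N2_eq u.2 w.2 huw)

open Classical in
noncomputable def gadLinClassifier (x : Fin 1 → ℝ) : Bool :=
  decide (GadLinColours (msetDecode (3 + 4) (x 0)))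

/-- there is an undirected ACR-GNN node classifier which accepts a node of a
finite undirected labelled graph of dimension 3 iff the graph is isomorphic to the
gadgetisation of a strict linear order. -/
theorem stmt17 :
    ∃ (dout : ℕ) (net : UACRNet 3 dout) (cls : (Fin dout → ℝ) → Bool),
      ∀ (V : Type) [Fintype V] (E : V → V → Prop),
        (∀ u v, E u v → E v u) → (∀ v, ¬ E v v) →
        ∀ (lab : V → Fin 3 → Bool) (v : V),
          (cls (UACRNet.eval E net (fun w => boolVec (lab w)) v) = true ↔
            IsGadLin E lab) := by
  refine ⟨1, gadLinNet, gadLinClassifier, ?_⟩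
  intro V _ E hsym _ lab v
  simp only [gadLinClassifier, decide_eq_true_iff]
  simp only [eval_gadLinNet, msetDecode_msetCode, gadLinColours_wlColours_iff]
  refine ⟨isGadLin_of_gadLinCriterion hsym, ?_⟩
  rintro ⟨U, _, R, hR, hiso⟩
  rw [← gadLinColours_wlColours_iff, msetOf_wlColours_eq_of_iso hiso, gadLinColours_wlColours_iff]
  exact gadLinCriterion_gad hR
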